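/- In the mapping class group of the five-holed sphere S, with boundary components labeled so that δ₁, δ₂, δ₃, ∂₁, ∂₂ are Dehn twists about curves parallel to the five boundary components, and D₁, D₂, D₃, D_∂ are Dehn twists about the four interior curves shown (each D_i encircling ∂₁ together with one of δ₁, δ₂, or ∂₂/δ₃ appropriately, and D_∂ encircling all but ∂₁), the relation ∂₁² ∘ ∂₂ ∘ δ₁ ∘ δ₂ ∘ δ₃ = D_∂ ∘ D₃ ∘ D₂ ∘ D₁ holds; moreover this relation follows from two applications of the classical lantern relation. -/

import Mathlib

theorem mul_eq_mul_of_mul_eq_mul_of_commute {G : Type*} [Group G] {a b c e x y : G}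
    (h₁ : a * x = y * b) (h₂ : c * y = e * x) (hx : Commute x b) : c * a = e * b :=
  mul_right_cancel <| calc
    c * a * x = c * y * b := by rw [mul_assoc, h₁, ← mul_assoc]
    _ = e * b * x := by rw [h₂, mul_assoc, hx.eq, ← mul_assoc]

/-- Here `d1,d2,d3` (= δ₁,δ₂,δ₃) and `p1,p2` (= ∂₁,∂₂) are the boundary twists,
`D1,D2,D3,Dp` (= D₁,D₂,D₃,D_∂) the interior twists, and `C1,C2` the twists about
the auxiliary curves bounding the two four-holed subspheres on which `lantern1`
and `lantern2` are the classical lantern relations. -/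
theorem stmt_16_general {G : Type*} [Group G]
    (d1 d2 d3 p1 p2 D1 D2 D3 Dp C1 C2 : G)
    (hd3 : ∀ x : G, Commute d3 x)
    (hp2 : ∀ x : G, Commute p2 x)
    (lantern1 : p1 * d1 * d2 * C1 = C2 * D2 * D1)
    (lantern2 : p1 * p2 * d3 * C2 = Dp * D3 * C1)
    (hC1D1 : Commute C1 D1) (hC1D2 : Commute C1 D2) :
    p1 ^ 2 * p2 * d1 * d2 * d3 = Dp * D3 * D2 * D1 := by
  have glued : p1 * p2 * d3 * (p1 * d1 * d2) = Dp * D3 * (D2 * D1) :=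
    mul_eq_mul_of_mul_eq_mul_of_commute (by rw [lantern1, mul_assoc]) lantern2
      (hC1D2.mul_right hC1D1)
  calc p1 ^ 2 * p2 * d1 * d2 * d3 = p1 * p2 * d3 * (p1 * d1 * d2) := by
        rw [mul_assoc _ d3, (hd3 _).eq]; simp only [sq, mul_assoc, (hp2 p1).left_comm]
    _ = Dp * D3 * D2 * D1 := by rw [glued, ← mul_assoc]

/-- Generalized lantern relation in the mapping class group of the five-holed
sphere (Endo–Mark–Van Horn-Morris), derived from two classical lantern
relations, stated abstractly in a group `G`.  Here `d1,d2,d3` (= δ₁,δ₂,δ₃) and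
`p1,p2` (= ∂₁,∂₂) are the Dehn twists about the five boundary-parallel curves
(hence central), `D1,D2,D3,Dp` (= D₁,D₂,D₃,D_∂) are the twists about the four
interior curves, and `C1,C2` are the twists about the auxiliary curves
bounding the two four-holed subspheres: `lantern1` is the lantern relation on
the subsphere containing ∂₁,δ₁,δ₂ and `lantern2` the one on the subsphere
containing ∂₁,∂₂,δ₃; `C1` is disjoint from the curves of `D1` and `D2`.
Conclusion: ∂₁² ∘ ∂₂ ∘ δ₁ ∘ δ₂ ∘ δ₃ = D_∂ ∘ D₃ ∘ D₂ ∘ D₁. -/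
theorem stmt_16 {G : Type*} [Group G]
    (d1 d2 d3 p1 p2 D1 D2 D3 Dp C1 C2 : G)
    (hd1 : ∀ x : G, Commute d1 x) (hd2 : ∀ x : G, Commute d2 x)
    (hd3 : ∀ x : G, Commute d3 x)
    (hp1 : ∀ x : G, Commute p1 x) (hp2 : ∀ x : G, Commute p2 x)
    (lantern1 : p1 * d1 * d2 * C1 = C2 * D2 * D1)
    (lantern2 : p1 * p2 * d3 * C2 = Dp * D3 * C1)
    (hC1D1 : Commute C1 D1) (hC1D2 : Commute C1 D2) :
    p1 ^ 2 * p2 * d1 * d2 * d3 = Dp * D3 * D2 * D1 :=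
  stmt_16_general d1 d2 d3 p1 p2 D1 D2 D3 Dp C1 C2 hd3 hp2 lantern1 lantern2 hC1D1 hC1D2
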